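/- Let (U = V, μ) be a word equation with regular constraint μ : Ω⁺ → S (S a finite semigroup) which has at least one solution and is nicely balanced with regard to some variable X ∈ 𝒳. Then for every n ∈ ℕ there is a solution σ of (U = V, μ) with exp(σ) ≥ n. -/

import Mathlib

namespace WordEq

variable {C X S : Type*}

/-- `spow u n = u^(n+1)` : positive powers in a semigroup. -/
def spow [Mul S] (u : S) : ℕ → S
  | 0 => u
  | n + 1 => spow u n * u

/-- `e` is the ω-power of `u`, i.e. the (unique) idempotent among the
positive powers `u, u², u³, …` of `u`. -/
def IsOmega [Mul S] (u e : S) : Prop := (∃ n : ℕ, spow u n = e) ∧ e * e = e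

/-- Extension of a substitution `σ : 𝒳 → Σ⁺` to words over `Ω = Σ ⊎ 𝒳`,
fixing the constants. -/
def subst (σ : X → List C) (w : List (C ⊕ X)) : List C :=
  w.flatMap (Sum.elim (fun a => [a]) σ)

/-- `p^k` occurs as a factor of `w`. -/
def hasPowFactor (w p : List C) (k : ℕ) : Prop :=
  ∃ u v : List C, w = u ++ (List.replicate k p).flatten ++ v

/-- The exponent of periodicity of a word: the largest `k` such that `p^k`
is a factor of `w` for some nonempty `p`. -/
noncomputable def expWord (w : List C) : ℕ :=
  sSup {k : ℕ | ∃ p : List C, p ≠ [] ∧ hasPowFactor w p k}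

/-- The exponent of periodicity of a substitution. -/
noncomputable def expSub [Fintype X] (σ : X → List C) : ℕ :=
  Finset.univ.sup fun x : X => expWord (σ x)

/-- `μ` is (the restriction to nonempty words of) a semigroup homomorphism
`Ω⁺ → S`. -/
def IsConstraint [Mul S] (μ : List (C ⊕ X) → S) : Prop :=
  ∀ u v : List (C ⊕ X), u ≠ [] → v ≠ [] → μ (u ++ v) = μ u * μ v

/-- `σ : 𝒳 → Σ⁺` is a solution of the word equation `U = V`. -/
def IsSolution (U V : List (C ⊕ X)) (σ : X → List C) : Prop :=
  (∀ x : X, σ x ≠ []) ∧ subst σ U = subst σ V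

/-- `σ` is a solution of the word equation `U = V` with constraint `μ`. -/
def IsSolutionC [Mul S] (U V : List (C ⊕ X)) (μ : List (C ⊕ X) → S)
    (σ : X → List C) : Prop :=
  IsSolution U V σ ∧ ∀ x : X, μ ((σ x).map Sum.inl) = μ [Sum.inr x]

/-- Each variable occurs at most twice in `UV`. -/
def Quadratic [DecidableEq C] [DecidableEq X] (U V : List (C ⊕ X)) : Prop :=
  ∀ x : X, (U ++ V).count (Sum.inr x) ≤ 2

/-- The equation `(U = V, μ)` is *nicely balanced* with regard to the
variable `x`: the set `{w ∈ Σ⁺ : μ(w) = μ(x)}` is infinite, and either `x`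
does not occur in `UV`, or (up to swapping the two sides) `U = x·u` and
`V = v·x·v'` where `u, v, v'` do not contain `x` and `v` is empty or
`μ(v)^ω μ(x) = μ(x)`. -/
def NicelyBalancedAt [Mul S] (U V : List (C ⊕ X)) (μ : List (C ⊕ X) → S)
    (x : X) : Prop :=
  {w : List C | w ≠ [] ∧ μ (w.map Sum.inl) = μ [Sum.inr x]}.Infinite ∧
  ((Sum.inr x ∉ U ++ V) ∨
    (∃ U' V' : List (C ⊕ X), ((U' = U ∧ V' = V) ∨ (U' = V ∧ V' = U)) ∧
      ∃ u v v' : List (C ⊕ X),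
        Sum.inr x ∉ u ∧ Sum.inr x ∉ v ∧ Sum.inr x ∉ v' ∧
        U' = Sum.inr x :: u ∧ V' = v ++ Sum.inr x :: v' ∧
        (v = [] ∨ ∀ e : S, IsOmega (μ v) e →
          e * μ [Sum.inr x] = μ [Sum.inr x])))


section Aux

open List

variable [Semigroup S]

private lemma spow_succ (t : S) (n : ℕ) : spow t (n + 1) = spow t n * t := rfl

private lemma spow_add (t : S) (m n : ℕ) :
    spow t (m + n + 1) = spow t m * spow t n := by
  induction n with
  | zero => rfl
  | succ n ih =>
    have h : m + (n + 1) + 1 = (m + n + 1) + 1 := by omega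
    rw [h, spow_succ, ih, spow_succ, mul_assoc]

private lemma spow_period {t : S} {i d : ℕ}
    (h : spow t i = spow t (i + d)) (m : ℕ) :
    spow t (i + m + d) = spow t (i + m) := by
  induction m with
  | zero => have : i + 0 + d = i + d := by omega
            rw [this]; simpa using h.symm
  | succ m ih =>
    have h1 : i + (m + 1) + d = (i + m + d) + 1 := by omega
    have h2 : i + (m + 1) = (i + m) + 1 := by omega
    rw [h1, h2, spow_succ, spow_succ, ih]

private lemma spow_period' {t : S} {i d : ℕ}
    (h : spow t i = spow t (i + d)) (k m : ℕ) :
    spow t (i + m + d * k) = spow t (i + m) := by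
  induction k with
  | zero => simp
  | succ k ih =>
    have h1 : i + m + d * (k + 1) = i + (m + d * k) + d := by ring
    have h2 : i + (m + d * k) = i + m + d * k := by omega
    rw [h1, spow_period h, h2, ih]

private lemma exists_idem [Finite S] (t : S) :
    ∃ m : ℕ, spow t m * spow t m = spow t m := by
  obtain ⟨a, b, hne, hfe⟩ := Finite.exists_ne_map_eq_of_infinite (spow t)
  obtain ⟨i, d, hd, hper⟩ : ∃ i d : ℕ, 0 < d ∧ spow t i = spow t (i + d) := by
    rcases lt_or_gt_of_ne hne with h | h
    · exact ⟨a, b - a, by omega, by rw [hfe]; congr 1; omega⟩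
    · exact ⟨b, a - b, by omega, by rw [← hfe]; congr 1; omega⟩
  refine ⟨d * (i + 1) - 1, ?_⟩
  set m := d * (i + 1) - 1 with hm
  have hdm : d * (i + 1) = m + 1 := by
    have : 1 ≤ d * (i + 1) := Nat.one_le_iff_ne_zero.mpr (by positivity)
    omega
  have him : i ≤ m := by nlinarith [Nat.le_mul_of_pos_left (i + 1) hd]
  rw [← spow_add]
  have h1 : m + m + 1 = i + (m - i) + d * (i + 1) := by omega
  have h2 : i + (m - i) = m := by omega
  rw [h1, spow_period' hper, h2]

private lemma idem_spow {t e : S} {n : ℕ} (hn : spow t n = e)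
    (he : e * e = e) (j : ℕ) : spow t (n + (n + 1) * j) = e := by
  induction j with
  | zero => simpa using hn
  | succ j ih =>
    have h1 : n + (n + 1) * (j + 1) = (n + (n + 1) * j) + n + 1 := by ring
    rw [h1, spow_add, ih, hn, he]

end Aux

section ListAux

open List

private lemma subst_append (σ : X → List C) (a b : List (C ⊕ X)) :
    subst σ (a ++ b) = subst σ a ++ subst σ b := by
  simp [subst]

private lemma subst_cons (σ : X → List C) (a : C ⊕ X) (w : List (C ⊕ X)) :
    subst σ (a :: w) = Sum.elim (fun c => [c]) σ a ++ subst σ w := by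
  simp [subst]

private lemma subst_inr (σ : X → List C) (x : X) :
    subst σ [Sum.inr x] = σ x := by
  simp [subst]

private lemma subst_ne_nil {σ : X → List C} (hσ : ∀ x, σ x ≠ [])
    {w : List (C ⊕ X)} (hw : w ≠ []) : subst σ w ≠ [] := by
  obtain ⟨a, w, rfl⟩ := List.exists_cons_of_ne_nil hw
  rw [subst_cons]
  rcases a with c | y
  · simp
  · simp only [Sum.elim_inr]
    exact fun h => hσ y (List.append_eq_nil_iff.mp h).1

private lemma subst_congr {σ σ' : X → List C} {w : List (C ⊕ X)}
    (h : ∀ y : X, Sum.inr y ∈ w → σ y = σ' y) : subst σ w = subst σ' w := by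
  induction w with
  | nil => rfl
  | cons a w ih =>
    rw [subst_cons, subst_cons,
      ih fun y hy => h y (List.mem_cons_of_mem _ hy)]
    rcases a with c | y
    · rfl
    · rw [Sum.elim_inr, Sum.elim_inr, h y List.mem_cons_self]

private lemma mu_single [Semigroup S] {μ : List (C ⊕ X) → S} {σ : X → List C}
    (hσμ : ∀ x, μ ((σ x).map Sum.inl) = μ [Sum.inr x]) (a : C ⊕ X) :
    μ ((Sum.elim (fun c => [c]) σ a).map Sum.inl) = μ [a] := by
  rcases a with c | y
  · rfl
  · exact hσμ y

private lemma mu_subst [Semigroup S] {μ : List (C ⊕ X) → S}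
    (hμ : IsConstraint μ) {σ : X → List C} (hσne : ∀ x, σ x ≠ [])
    (hσμ : ∀ x, μ ((σ x).map Sum.inl) = μ [Sum.inr x]) :
    ∀ w : List (C ⊕ X), w ≠ [] → μ ((subst σ w).map Sum.inl) = μ w := by
  intro w
  induction w with
  | nil => intro h; exact absurd rfl h
  | cons a w ih =>
    intro _
    rcases eq_or_ne w [] with rfl | hw
    · rw [subst_cons]
      simpa [subst] using mu_single hσμ a
    · have hea : (Sum.elim (fun c => [c]) σ a) ≠ [] := by
        rcases a with c | y
        · simp
        · exact hσne y
      rw [subst_cons, List.map_append,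
        hμ _ _ (by simpa using hea) (by simpa using subst_ne_nil hσne hw),
        mu_single hσμ a, ih hw]
      have : (a :: w) = [a] ++ w := rfl
      rw [this, hμ [a] w (by simp) hw]

private lemma expWord_ge {w p : List C} {n : ℕ} (hp : p ≠ [])
    (h : hasPowFactor w p n) : n ≤ expWord w := by
  apply le_csSup
  · refine ⟨w.length, fun k hk => ?_⟩
    obtain ⟨q, hq, u, v, rfl⟩ := hk
    have hq1 : 1 ≤ q.length := List.length_pos_iff.mpr hq
    have hlen : ((List.replicate k q).flatten).length = k * q.length := by
      simp [List.length_flatten, List.map_replicate, List.sum_replicate, smul_eq_mul]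
    calc k ≤ k * q.length := Nat.le_mul_of_pos_right k hq1
      _ ≤ _ := by simp only [List.length_append, hlen]; omega
  · exact ⟨p, hp, h⟩

end ListAux


section Pump

open List

private lemma expSub_ge [Fintype X] (σ : X → List C) (x : X) :
    expWord (σ x) ≤ expSub σ := by
  unfold expSub
  exact Finset.le_sup (f := fun x => expWord (σ x)) (Finset.mem_univ x)

private lemma flatten_replicate_comm (W : List C) (k : ℕ) :
    W ++ (List.replicate k W).flatten = (List.replicate k W).flatten ++ W := by
  induction k with
  | zero => simp
  | succ k ih => simp only [List.replicate_succ, List.flatten_cons]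
                 rw [List.append_assoc, ih, ← List.append_assoc]

private lemma flatten_replicate_ne_nil {W : List C} (hW : W ≠ []) (m : ℕ) :
    (List.replicate (m + 1) W).flatten ≠ [] := by
  simp only [List.replicate_succ, List.flatten_cons]
  intro h
  exact hW (List.append_eq_nil_iff.mp h).1

private lemma mu_replicate [Semigroup S] {μ : List (C ⊕ X) → S}
    (hμ : IsConstraint μ) {W : List C} (hW : W ≠ []) (m : ℕ) :
    μ (((List.replicate (m + 1) W).flatten).map Sum.inl)
      = spow (μ (W.map Sum.inl)) m := by
  induction m with
  | zero => simp [spow]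
  | succ m ih =>
    have h : List.replicate (m + 1 + 1) W = List.replicate (m + 1) W ++ [W] := by
      rw [← List.replicate_succ']
    rw [h, List.flatten_append, List.map_append,
      hμ _ _ (by simpa using flatten_replicate_ne_nil hW m) (by simpa using hW),
      spow_succ, ih]
    simp

private lemma mu_pump [Semigroup S] {μ : List (C ⊕ X) → S} (hμ : IsConstraint μ)
    {u p : List C} (hu : u ≠ []) (hp : p ≠ [])
    (h : μ ((u ++ p).map Sum.inl) = μ (u.map Sum.inl)) (k : ℕ) :
    μ ((u ++ (List.replicate k p).flatten).map Sum.inl) = μ (u.map Sum.inl) := by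
  induction k with
  | zero => simp
  | succ k ih =>
    have h1 : u ++ (List.replicate (k + 1) p).flatten
        = (u ++ (List.replicate k p).flatten) ++ p := by
      simp [List.replicate_succ', List.append_assoc]
    have hune : (u ++ (List.replicate k p).flatten) ≠ [] := by
      intro hc; exact hu (List.append_eq_nil_iff.mp hc).1
    rw [h1, List.map_append,
      hμ _ _ (by simpa using hune) (by simpa using hp), ih,
      ← hμ _ _ (by simpa using hu) (by simpa using hp), ← List.map_append, h]

private lemma pump_exists [Fintype C] [Semigroup S] [Finite S]
    {μ : List (C ⊕ X) → S} (hμ : IsConstraint μ) {s : S}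
    (hinf : {w : List C | w ≠ [] ∧ μ (w.map Sum.inl) = s}.Infinite) (n : ℕ) :
    ∃ w : List C, w ≠ [] ∧ μ (w.map Sum.inl) = s ∧ n ≤ expWord w := by
  have _inst := Fintype.ofFinite S
  obtain ⟨w, hwmem, hwlen⟩ : ∃ w ∈ {w : List C | w ≠ [] ∧ μ (w.map Sum.inl) = s},
      Fintype.card S < w.length := by
    by_contra hc
    push_neg at hc
    exact hinf (((List.finite_length_le C (Fintype.card S)).subset)
      fun w hw => hc w hw)
  obtain ⟨hwne, hwμ⟩ := hwmem
  obtain ⟨i, j, hij, hjlt, hfe⟩ : ∃ i j : ℕ, i < j ∧ j < w.length ∧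
      μ ((w.take (i + 1)).map Sum.inl) = μ ((w.take (j + 1)).map Sum.inl) := by
    obtain ⟨a, b, hne, hfe⟩ := Fintype.exists_ne_map_eq_of_card_lt
      (fun k : Fin w.length => μ ((w.take (k.1 + 1)).map Sum.inl))
      (by simpa using hwlen)
    rcases lt_or_gt_of_ne hne with h | h
    · exact ⟨a.1, b.1, h, b.isLt, hfe⟩
    · exact ⟨b.1, a.1, h, a.isLt, hfe.symm⟩
  set u := w.take (i + 1) with hu
  set p := (w.drop (i + 1)).take (j - i) with hp
  set v := w.drop (j + 1) with hv
  have hup : u ++ p = w.take (j + 1) := by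
    rw [hu, hp, ← List.take_add]
    congr 1
    omega
  have hw : (u ++ p) ++ v = w := by rw [hup, hv, List.take_append_drop]
  have hune : u ≠ [] := by
    have : u.length = i + 1 := by
      rw [hu, List.length_take]; omega
    intro hc; rw [hc] at this; simp at this
  have hpne : p ≠ [] := by
    have : p.length = j - i := by
      rw [hp, List.length_take, List.length_drop]; omega
    intro hc; rw [hc] at this; simp at this; omega
  have hkey : μ ((u ++ p).map Sum.inl) = μ (u.map Sum.inl) := by
    rw [hup]; exact hfe.symm
  refine ⟨u ++ (List.replicate n p).flatten ++ v, ?_, ?_, ?_⟩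
  · intro hc
    exact hune (List.append_eq_nil_iff.mp (List.append_eq_nil_iff.mp hc).1).1
  · rcases eq_or_ne v [] with hvnil | hvne
    · rw [hvnil, List.append_nil]
      rw [hvnil, List.append_nil] at hw
      rw [mu_pump hμ hune hpne hkey, ← hwμ, ← hw, hkey]
    · have hA : u ++ (List.replicate n p).flatten ≠ [] := by
        intro hc; exact hune (List.append_eq_nil_iff.mp hc).1
      rw [List.map_append, hμ _ _ (by simpa using hA) (by simpa using hvne),
        mu_pump hμ hune hpne hkey, ← hwμ, ← hw, List.map_append,
        hμ _ _ (by simpa using (fun hc => hune (List.append_eq_nil_iff.mp hc).1 :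
          u ++ p ≠ [])) (by simpa using hvne), hkey]
  · exact expWord_ge hpne ⟨u, v, rfl⟩

end Pump


private lemma subst_cons_inr (σ : X → List C) (x : X) (w : List (C ⊕ X)) :
    subst σ (Sum.inr x :: w) = σ x ++ subst σ w := by
  simp [subst]

/-- A solvable word equation with regular constraint which is
nicely balanced with regard to some variable has solutions of arbitrarily
large exponent of periodicity. -/
theorem stmt17 {C X S : Type} [Fintype C] [Fintype X] [Semigroup S] [Finite S]
    (U V : List (C ⊕ X)) (hU : U ≠ []) (hV : V ≠ [])
    (μ : List (C ⊕ X) → S) (hμ : IsConstraint μ)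
    (hsolv : ∃ σ : X → List C, IsSolutionC U V μ σ)
    (hnb : ∃ x : X, NicelyBalancedAt U V μ x) :
    ∀ n : ℕ, ∃ σ : X → List C, IsSolutionC U V μ σ ∧ n ≤ expSub σ := by
  classical
  obtain ⟨σ, ⟨⟨hσne, hσeq⟩, hσμ⟩⟩ := hsolv
  obtain ⟨x, hinf, hcase⟩ := hnb
  intro n
  rcases hcase with hnmem | ⟨U', V', hUV, u, v, v', hxu, hxv, hxv', hU', hV', hvcase⟩
  · -- Case 1 : x does not occur in UV
    obtain ⟨w', hw'ne, hw'μ, hw'exp⟩ := pump_exists hμ hinf n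
    set σ' : X → List C := Function.update σ x w' with hσ'def
    have hσ'x : σ' x = w' := Function.update_self x w' σ
    have hσ'y : ∀ y, y ≠ x → σ' y = σ y := fun y hy => Function.update_of_ne hy w' σ
    have hxU : Sum.inr x ∉ U := fun h => hnmem (List.mem_append.mpr (Or.inl h))
    have hxV : Sum.inr x ∉ V := fun h => hnmem (List.mem_append.mpr (Or.inr h))
    have hσ'ne : ∀ y, σ' y ≠ [] := by
      intro y; rcases eq_or_ne y x with rfl | hy
      · rw [hσ'x]; exact hw'ne
      · rw [hσ'y y hy]; exact hσne y
    refine ⟨σ', ⟨⟨hσ'ne, ?_⟩, ?_⟩, ?_⟩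
    · have h1 : subst σ' U = subst σ U :=
        subst_congr fun y hy => hσ'y y (by rintro rfl; exact hxU hy)
      have h2 : subst σ' V = subst σ V :=
        subst_congr fun y hy => hσ'y y (by rintro rfl; exact hxV hy)
      rw [h1, h2, hσeq]
    · intro y; rcases eq_or_ne y x with rfl | hy
      · rw [hσ'x]; exact hw'μ
      · rw [hσ'y y hy]; exact hσμ y
    · calc n ≤ expWord w' := hw'exp
        _ = expWord (σ' x) := by rw [hσ'x]
        _ ≤ expSub σ' := expSub_ge σ' x
  · -- Case 2 : U' = x u, V' = v x v'
    have hswap : subst σ U' = subst σ V' ∧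
        (∀ τ : X → List C, subst τ U' = subst τ V' → subst τ U = subst τ V) := by
      rcases hUV with ⟨rfl, rfl⟩ | ⟨rfl, rfl⟩
      · exact ⟨hσeq, fun τ h => h⟩
      · exact ⟨hσeq.symm, fun τ h => h.symm⟩
    obtain ⟨heq', hback⟩ := hswap
    rcases eq_or_ne v [] with hvnil | hvne
    · -- Subcase v = [] : replace σ x freely
      have hV'' : V' = Sum.inr x :: v' := by rw [hV', hvnil]; rfl
      have hcancel : subst σ u = subst σ v' := by
        rw [hU', hV'', subst_cons_inr, subst_cons_inr] at heq'
        exact List.append_cancel_left heq'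
      obtain ⟨w', hw'ne, hw'μ, hw'exp⟩ := pump_exists hμ hinf n
      set σ' : X → List C := Function.update σ x w' with hσ'def
      have hσ'x : σ' x = w' := Function.update_self x w' σ
      have hσ'y : ∀ y, y ≠ x → σ' y = σ y := fun y hy => Function.update_of_ne hy w' σ
      have hσ'ne : ∀ y, σ' y ≠ [] := by
        intro y; rcases eq_or_ne y x with rfl | hy
        · rw [hσ'x]; exact hw'ne
        · rw [hσ'y y hy]; exact hσne y
      have hcu : subst σ' u = subst σ u :=
        subst_congr fun y hy => hσ'y y (by rintro rfl; exact hxu hy)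
      have hcv' : subst σ' v' = subst σ v' :=
        subst_congr fun y hy => hσ'y y (by rintro rfl; exact hxv' hy)
      refine ⟨σ', ⟨⟨hσ'ne, ?_⟩, ?_⟩, ?_⟩
      · refine hback σ' ?_
        rw [hU', hV'', subst_cons_inr, subst_cons_inr, hcu, hcv', hcancel]
      · intro y; rcases eq_or_ne y x with rfl | hy
        · rw [hσ'x]; exact hw'μ
        · rw [hσ'y y hy]; exact hσμ y
      · calc n ≤ expWord w' := hw'exp
          _ = expWord (σ' x) := by rw [hσ'x]
          _ ≤ expSub σ' := expSub_ge σ' x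
    · -- Subcase v ≠ [] : pump with powers of subst σ v
      have homega := hvcase.resolve_left hvne
      set W : List C := subst σ v with hWdef
      have hWne : W ≠ [] := subst_ne_nil hσne hvne
      have hWμ : μ (W.map Sum.inl) = μ v := mu_subst hμ hσne hσμ v hvne
      set t : S := μ (W.map Sum.inl) with htdef
      obtain ⟨m₀, hid⟩ := exists_idem t
      have he : spow t m₀ * μ [Sum.inr x] = μ [Sum.inr x] :=
        homega (spow t m₀) ⟨⟨m₀, by rw [← hWμ]⟩, hid⟩
      set K : ℕ := m₀ + (m₀ + 1) * n + 1 with hKdef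
      have hKn : n ≤ K := by
        have := Nat.le_mul_of_pos_left n (show 0 < m₀ + 1 by omega)
        omega
      set A : List C := (List.replicate K W).flatten with hAdef
      have hAne : A ≠ [] := flatten_replicate_ne_nil hWne (m₀ + (m₀ + 1) * n)
      have hAμ : μ (A.map Sum.inl) = spow t m₀ :=
        (mu_replicate hμ hWne (m₀ + (m₀ + 1) * n)).trans (idem_spow rfl hid n)
      set σ' : X → List C := Function.update σ x (A ++ σ x) with hσ'def
      have hσ'x : σ' x = A ++ σ x := Function.update_self x _ σ
      have hσ'y : ∀ y, y ≠ x → σ' y = σ y := fun y hy => Function.update_of_ne hy _ σ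
      have hσ'ne : ∀ y, σ' y ≠ [] := by
        intro y; rcases eq_or_ne y x with rfl | hy
        · rw [hσ'x]; intro hc; exact hAne (List.append_eq_nil_iff.mp hc).1
        · rw [hσ'y y hy]; exact hσne y
      have hcu : subst σ' u = subst σ u :=
        subst_congr fun y hy => hσ'y y (by rintro rfl; exact hxu hy)
      have hcv : subst σ' v = subst σ v :=
        subst_congr fun y hy => hσ'y y (by rintro rfl; exact hxv hy)
      have hcv' : subst σ' v' = subst σ v' :=
        subst_congr fun y hy => hσ'y y (by rintro rfl; exact hxv' hy)
      have heq : σ x ++ subst σ u = W ++ (σ x ++ subst σ v') := by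
        rw [hU', hV', subst_cons_inr, subst_append, subst_cons_inr] at heq'
        exact heq'
      refine ⟨σ', ⟨⟨hσ'ne, ?_⟩, ?_⟩, ?_⟩
      · refine hback σ' ?_
        rw [hU', hV', subst_append, subst_cons_inr, subst_cons_inr, hcu, hcv, hcv',
          hσ'x, ← hWdef]
        calc (A ++ σ x) ++ subst σ u = A ++ (σ x ++ subst σ u) := by
              rw [List.append_assoc]
          _ = A ++ (W ++ (σ x ++ subst σ v')) := by rw [heq]
          _ = (A ++ W) ++ (σ x ++ subst σ v') := by rw [List.append_assoc]
          _ = (W ++ A) ++ (σ x ++ subst σ v') := by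
              rw [← flatten_replicate_comm]
          _ = W ++ ((A ++ σ x) ++ subst σ v') := by
              simp only [List.append_assoc]
      · intro y; rcases eq_or_ne y x with rfl | hy
        · rw [hσ'x, List.map_append,
            hμ _ _ (by simpa using hAne) (by simpa using hσne y), hAμ, hσμ y, he]
        · rw [hσ'y y hy]; exact hσμ y
      · have hfac : hasPowFactor (σ' x) W K := ⟨[], σ x, by rw [hσ'x, hAdef]; simp⟩
        calc n ≤ K := hKn
          _ ≤ expWord (σ' x) := expWord_ge hWne hfac
          _ ≤ expSub σ' := expSub_ge σ' x

end WordEq
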